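/- arXiv:2302.03672 — 3 statements merged into one kernel-verified Lean document; each statement's English description precedes it below -/
import Mathlib

section
/- Every output of sequential Phragmén satisfies PJR-x with respect to every DNS satisfaction function μ. -/
open Finset

namespace ABB

variable {V P : Type} [Fintype V] [DecidableEq V] [Fintype P] [DecidableEq P]

/-- Total cost of a set of projects. -/
def costOf (c : P → ℝ) (S : Finset P) : ℝ := ∑ p ∈ S, c p

/-- `μ` is an (approval-based) satisfaction function: monotone w.r.t. inclusion,
nonnegative, and zero exactly on the empty set. -/
def IsSatFun (μ : Finset P → ℝ) : Prop :=
  (∀ S T : Finset P, S ⊆ T → μ S ≤ μ T) ∧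
  (∀ S : Finset P, μ S = 0 ↔ S = ∅) ∧
  (∀ S : Finset P, 0 ≤ μ S)

/-- `μ` is strictly increasing. -/
def StrictlyIncreasing (μ : Finset P → ℝ) : Prop :=
  ∀ S T : Finset P, S ⊂ T → μ S < μ T

/-- `μ` is cost-neutral: sets related by a cost-preserving bijection get equal satisfaction. -/
def CostNeutral (c : P → ℝ) (μ : Finset P → ℝ) : Prop :=
  ∀ S T : Finset P,
    (∃ f : {p // p ∈ S} → {p // p ∈ T},
        Function.Bijective f ∧ ∀ p : {p // p ∈ S}, c p.val = c (f p).val) →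
    μ S = μ T

/-- `μ` is additive. -/
def Additive (μ : Finset P → ℝ) : Prop :=
  ∀ S : Finset P, μ S = ∑ p ∈ S, μ {p}

/-- `μ` is strictly cost-responsive. -/
def StrictlyCostResponsive (c : P → ℝ) (μ : Finset P → ℝ) : Prop :=
  ∀ S T : Finset P, costOf c S < costOf c T → μ S < μ T

/-- The instance is a unit-cost instance. -/
def UnitCost (c : P → ℝ) : Prop := ∀ p : P, c p = 1

/-- `μ` has weakly decreasing normalized satisfaction (DNS): it is additive, and for
projects `p, p'` with `c p ≤ c p'` we have `μ {p} ≤ μ {p'}` and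
`μ {p} / c p ≥ μ {p'} / c p'`. -/
def DNS (c : P → ℝ) (μ : Finset P → ℝ) : Prop :=
  Additive μ ∧
  ∀ p p' : P, c p ≤ c p' → μ {p} ≤ μ {p'} ∧ μ {p'} / c p' ≤ μ {p} / c p

/-- A (nonempty) group `N'` of voters is `T`-cohesive. -/
def Cohesive (A : V → Finset P) (c : P → ℝ) (b : ℝ)
    (N' : Finset V) (T : Finset P) : Prop :=
  N'.Nonempty ∧ (∀ i ∈ N', T ⊆ A i) ∧
    costOf c T ≤ ((N'.card : ℝ) / (Fintype.card V : ℝ)) * b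

/-- Extended justified representation w.r.t. `μ`. -/
def EJR (A : V → Finset P) (c : P → ℝ) (b : ℝ) (μ : Finset P → ℝ) (W : Finset P) : Prop :=
  ∀ (N' : Finset V) (T : Finset P), Cohesive A c b N' T →
    ∃ i ∈ N', μ T ≤ μ (A i ∩ W)

/-- EJR up to one project w.r.t. `μ`. -/
def EJR1 (A : V → Finset P) (c : P → ℝ) (b : ℝ) (μ : Finset P → ℝ) (W : Finset P) : Prop :=
  ∀ (N' : Finset V) (T : Finset P), Cohesive A c b N' T →
    T ⊆ W ∨ ∃ i ∈ N', ∃ p ∉ W, μ T < μ (A i ∩ insert p W)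

/-- EJR up to any project w.r.t. `μ`. -/
def EJRx (A : V → Finset P) (c : P → ℝ) (b : ℝ) (μ : Finset P → ℝ) (W : Finset P) : Prop :=
  ∀ (N' : Finset V) (T : Finset P), Cohesive A c b N' T →
    ∃ i ∈ N', ∀ p ∈ T \ W, μ T < μ (A i ∩ insert p W)

/-- `μ`-EJR-1⁺: like EJR-1, but the additional project must come from `T`. -/
def EJR1plus (A : V → Finset P) (c : P → ℝ) (b : ℝ) (μ : Finset P → ℝ) (W : Finset P) : Prop :=
  ∀ (N' : Finset V) (T : Finset P), Cohesive A c b N' T →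
    T ⊆ W ∨ ∃ i ∈ N', ∃ p ∈ T \ W, μ T < μ (A i ∩ insert p W)

/-- Proportional justified representation w.r.t. `μ`. -/
def PJR (A : V → Finset P) (c : P → ℝ) (b : ℝ) (μ : Finset P → ℝ) (W : Finset P) : Prop :=
  ∀ (N' : Finset V) (T : Finset P), Cohesive A c b N' T →
    μ T ≤ μ (W ∩ N'.biUnion A)

/-- PJR up to any project w.r.t. `μ`. -/
def PJRx (A : V → Finset P) (c : P → ℝ) (b : ℝ) (μ : Finset P → ℝ) (W : Finset P) : Prop :=
  ∀ (N' : Finset V) (T : Finset P), Cohesive A c b N' T →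
    ∀ p ∈ T \ W, μ T < μ (insert p (W ∩ N'.biUnion A))

/-- `μ`-Local-BPJR. -/
def LocalBPJR (A : V → Finset P) (c : P → ℝ) (b : ℝ) (μ : Finset P → ℝ) (W : Finset P) : Prop :=
  ¬ ∃ (N' : Finset V) (T Wstar : Finset P),
      Cohesive A c b N' T ∧
      N'.biUnion A ∩ W ⊂ Wstar ∧
      (∀ i ∈ N', Wstar ⊆ A i) ∧
      costOf c Wstar ≤ costOf c T ∧
      (∀ W' : Finset P, (∀ i ∈ N', W' ⊆ A i) → costOf c W' ≤ costOf c T → μ W' ≤ μ Wstar)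

/-- The set of approvers of a project. -/
def approvers (A : V → Finset P) (p : P) : Finset V :=
  Finset.univ.filter (fun i => p ∈ A i)

/-- `p` is `ρ`-affordable given per-voter remaining budgets `bud`. -/
def Affordable (A : V → Finset P) (c : P → ℝ) (μ : Finset P → ℝ)
    (bud : V → ℝ) (p : P) (ρ : ℝ) : Prop :=
  ∑ i ∈ approvers A p, min (bud i) (ρ * μ {p}) = c p

/-- The states (selected set, remaining budgets) reachable by the Method of Equal Shares,
starting from initial per-voter budget `b0`. -/
inductive MESReach (A : V → Finset P) (c : P → ℝ) (μ : Finset P → ℝ) (b0 : ℝ) :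
    Finset P → (V → ℝ) → Prop
  | init : MESReach A c μ b0 ∅ (fun _ => b0)
  | step {W : Finset P} {bud : V → ℝ} {p : P} {ρ : ℝ} :
      MESReach A c μ b0 W bud →
      p ∉ W → 0 ≤ ρ →
      Affordable A c μ bud p ρ →
      (∀ p' ∉ W, ∀ ρ' : ℝ, 0 ≤ ρ' → Affordable A c μ bud p' ρ' → ρ ≤ ρ') →
      MESReach A c μ b0 (insert p W)
        (fun i => if p ∈ A i then bud i - min (bud i) (ρ * μ {p}) else bud i)

/-- `W` is an output of MES[μ]: it is reachable and no further project is affordable. -/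
def MESOutput (A : V → Finset P) (c : P → ℝ) (b : ℝ) (μ : Finset P → ℝ) (W : Finset P) : Prop :=
  ∃ bud : V → ℝ,
    MESReach A c μ (b / (Fintype.card V : ℝ)) W bud ∧
    ∀ p ∉ W, ∀ ρ : ℝ, 0 ≤ ρ → ¬ Affordable A c μ bud p ρ

/-- `(B, d)` is a price system for `W` (conditions C1–C5). -/
def PriceSystem (A : V → Finset P) (c : P → ℝ) (W : Finset P)
    (B : ℝ) (d : V → P → ℝ) : Prop :=
  0 < B ∧
  (∀ (i : V) (p : P), 0 ≤ d i p ∧ d i p ≤ B / (Fintype.card V : ℝ)) ∧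
  (∀ (i : V) (p : P), 0 < d i p → p ∈ A i) ∧
  (∀ (i : V) (p : P), 0 < d i p → p ∈ W) ∧
  (∀ i : V, ∑ p : P, d i p ≤ B / (Fintype.card V : ℝ)) ∧
  (∀ p ∈ W, ∑ i : V, d i p = c p) ∧
  (∀ p ∉ W, ∑ i ∈ approvers A p, (B / (Fintype.card V : ℝ) - ∑ p' : P, d i p') ≤ c p)

/-- Condition C6 for a payment function `d`. -/
def C6 (A : V → Finset P) (c : P → ℝ) (W : Finset P) (d : V → P → ℝ) : Prop :=
  ∀ p ∉ W, ∀ p' ∈ W, ∑ i ∈ approvers A p, d i p' ≤ c p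

/-- Unselected projects with at least one approver. -/
def phragCandidates (A : V → Finset P) (W : Finset P) : Finset P :=
  Finset.univ.filter (fun p => p ∉ W ∧ (approvers A p).Nonempty)

/-- Sequential Phragmén's value `t(p)` given loads `l`. -/
noncomputable def phragLoad (A : V → Finset P) (c : P → ℝ) (l : V → ℝ) (p : P) : ℝ :=
  (c p + ∑ i ∈ approvers A p, l i) / ((approvers A p).card : ℝ)

/-- The states (selected set, loads) reachable by sequential Phragmén. -/
inductive PhragReach (A : V → Finset P) (c : P → ℝ) (b : ℝ) :
    Finset P → (V → ℝ) → Prop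
  | init : PhragReach A c b ∅ (fun _ => 0)
  | step {W : Finset P} {l : V → ℝ} {p : P} :
      PhragReach A c b W l →
      p ∈ phragCandidates A W →
      (∀ p' ∈ phragCandidates A W, phragLoad A c l p ≤ phragLoad A c l p') →
      (∀ p' ∈ phragCandidates A W,
        (∀ p'' ∈ phragCandidates A W, phragLoad A c l p' ≤ phragLoad A c l p'') →
        costOf c W + c p' ≤ b) →
      PhragReach A c b (insert p W)
        (fun i => if p ∈ A i then phragLoad A c l p else l i)

/-- `W` is an output of sequential Phragmén: it is reachable and the rule terminates at `W`
(either no candidate is left, or some minimizer of `t` would exceed the budget). -/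
def PhragOutput (A : V → Finset P) (c : P → ℝ) (b : ℝ) (W : Finset P) : Prop :=
  ∃ l : V → ℝ, PhragReach A c b W l ∧
    (phragCandidates A W = ∅ ∨
      ∃ p ∈ phragCandidates A W,
        (∀ p' ∈ phragCandidates A W, phragLoad A c l p ≤ phragLoad A c l p') ∧
        b < costOf c W + c p)

end ABB

/-!
Sequential Phragmén can be read as a payment scheme: when a project `p` is bought at value
`t = t(p)`, each approver `i` of `p` pays `t - l i` for it, which raises every approver's load
to `t`. Since `t` is the smallest value among the candidates, the approvers of any unselected
project `q` together paid at most `c q` for each selected project.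

If the rule stops because a minimizer `q` overruns the budget, then
`b < c(W) + c q ≤ n t(p)` for every unselected `p`. For a `T`-cohesive group `N'` and
`p ∈ T \ W` this gives `c(T) ≤ |N'| b / n < |N'| t(p) ≤ c p + (what N' paid for W)`, so the
projects of `T \ W` other than `p` cost less than what `N'` paid for the projects `w` it
approves in `W \ T`. Each such `w` received at most `min (c w) (c q)` for every `q ∈ T \ W`,
so by DNS its satisfaction is at least that payment times the best satisfaction-per-cost ratio
in `T \ W`. Summing, `μ(T) < μ(insert p (W ∩ ⋃_{N'} A))`.
-/

namespace ABB

section Load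

variable {V P : Type} [Fintype V] [DecidableEq P] {A : V → Finset P} {c : P → ℝ}
  {l : V → ℝ} {p : P}

@[simp]
lemma mem_approvers {i : V} : i ∈ approvers A p ↔ p ∈ A i := by
  simp [approvers]

lemma sum_approvers_phragLoad_sub (hp : (approvers A p).Nonempty) :
    ∑ i ∈ approvers A p, (phragLoad A c l p - l i) = c p := by
  have hcard : ((approvers A p).card : ℝ) ≠ 0 := by exact_mod_cast hp.card_pos.ne'
  rw [sum_sub_distrib, sum_const, nsmul_eq_mul, phragLoad, mul_div_cancel₀ _ hcard]
  ring

lemma sum_sub_le_of_le_phragLoad (hp : (approvers A p).Nonempty) {t : ℝ}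
    (ht : t ≤ phragLoad A c l p) : ∑ i ∈ approvers A p, (t - l i) ≤ c p :=
  calc ∑ i ∈ approvers A p, (t - l i)
      ≤ ∑ i ∈ approvers A p, (phragLoad A c l p - l i) := sum_le_sum fun i _ => by linarith
    _ = c p := sum_approvers_phragLoad_sub hp

lemma le_sum_sub_of_phragLoad_le (hp : (approvers A p).Nonempty) {t : ℝ}
    (ht : phragLoad A c l p ≤ t) : c p ≤ ∑ i ∈ approvers A p, (t - l i) :=
  calc c p = ∑ i ∈ approvers A p, (phragLoad A c l p - l i) :=
        (sum_approvers_phragLoad_sub hp).symm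
    _ ≤ ∑ i ∈ approvers A p, (t - l i) := sum_le_sum fun i _ => by linarith

lemma card_mul_phragLoad_le (hp : (approvers A p).Nonempty) {S : Finset V}
    (hS : S ⊆ approvers A p) (hl : ∀ i, l i ≤ phragLoad A c l p) :
    S.card * phragLoad A c l p ≤ c p + ∑ i ∈ S, l i := by
  have h : ∑ i ∈ S, (phragLoad A c l p - l i) ≤ c p :=
    (sum_le_sum_of_subset_of_nonneg hS fun i _ _ => sub_nonneg.2 (hl i)).trans_eq
      (sum_approvers_phragLoad_sub hp)
  rw [sum_sub_distrib, sum_const, nsmul_eq_mul] at h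
  linarith

lemma phragLoad_mono {l l' : V → ℝ} (h : l ≤ l') : phragLoad A c l p ≤ phragLoad A c l' p :=
  div_le_div_of_nonneg_right (by gcongr with i; exact h i) (Nat.cast_nonneg _)

end Load

section Phragmen

variable {V P : Type} [Fintype V] [Fintype P] [DecidableEq P] {A : V → Finset P} {c : P → ℝ}
  {b : ℝ} {W : Finset P} {l : V → ℝ}

@[simp]
lemma mem_phragCandidates {p : P} :
    p ∈ phragCandidates A W ↔ p ∉ W ∧ (approvers A p).Nonempty := by
  simp [phragCandidates]

lemma PhragReach.le_phragLoad (hc : ∀ p, 0 ≤ c p) (h : PhragReach A c b W l) :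
    ∀ p ∈ phragCandidates A W, ∀ i, l i ≤ phragLoad A c l p := by
  induction h with
  | init => exact fun p _ i => div_nonneg (by simpa using hc p) (Nat.cast_nonneg _)
  | @step W l p _ hp hmin _ ih =>
    intro p' hp' i
    have hp'W : p' ∈ phragCandidates A W := by
      simp only [mem_phragCandidates, mem_insert, not_or] at hp' ⊢
      exact ⟨hp'.1.2, hp'.2⟩
    have hl : l ≤ fun i => if p ∈ A i then phragLoad A c l p else l i := fun i => by
      dsimp only
      split_ifs
      exacts [ih p hp i, le_rfl]
    calc (if p ∈ A i then phragLoad A c l p else l i) ≤ phragLoad A c l p := by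
          split_ifs
          exacts [le_rfl, ih p hp i]
      _ ≤ phragLoad A c l p' := hmin p' hp'W
      _ ≤ _ := phragLoad_mono hl

/-- `d i w` is the part of the load of voter `i` spent on the project `w`. -/
structure LoadDistribution (A : V → Finset P) (c : P → ℝ) (W : Finset P) (l : V → ℝ)
    (d : V → P → ℝ) : Prop where
  nonneg : ∀ i w, 0 ≤ d i w
  mem_of_ne_zero : ∀ i w, d i w ≠ 0 → w ∈ A i ∧ w ∈ W
  sum_voters : ∀ w ∈ W, ∑ i, d i w = c w
  sum_projects : ∀ i, ∑ w, d i w = l i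
  sum_approvers_le : ∀ q ∉ W, (approvers A q).Nonempty →
    ∀ w ∈ W, ∑ i ∈ approvers A q, d i w ≤ c q

namespace LoadDistribution

variable {d : V → P → ℝ}

lemma empty : LoadDistribution A c ∅ (fun _ => 0) (fun _ _ => 0) where
  nonneg _ _ := le_rfl
  mem_of_ne_zero _ _ h := absurd rfl h
  sum_voters _ h := absurd h (notMem_empty _)
  sum_projects _ := sum_const_zero
  sum_approvers_le _ _ _ _ h := absurd h (notMem_empty _)

lemma eq_zero_of_notMem (hd : LoadDistribution A c W l d) {w : P} (hw : w ∉ W) (i : V) :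
    d i w = 0 :=
  by_contra fun h => hw (hd.mem_of_ne_zero i w h).2

lemma insert (hd : LoadDistribution A c W l d) {p : P} (hp : p ∈ phragCandidates A W)
    (hl : ∀ i, l i ≤ phragLoad A c l p)
    (hmin : ∀ q ∈ phragCandidates A W, phragLoad A c l p ≤ phragLoad A c l q) :
    LoadDistribution A c (insert p W) (fun i => if p ∈ A i then phragLoad A c l p else l i)
      (fun i w => d i w + if w = p ∧ p ∈ A i then phragLoad A c l p - l i else 0) := by
  set t := phragLoad A c l p
  obtain ⟨hpW, hpA⟩ := mem_phragCandidates.1 hp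
  refine ⟨fun i w => add_nonneg (hd.nonneg i w) ?_, fun i w h => ?_, fun w hw => ?_,
    fun i => ?_, fun q hq hqA w hw => ?_⟩
  · split_ifs
    exacts [sub_nonneg.2 (hl i), le_rfl]
  · by_cases hwp : w = p
    · subst hwp
      by_cases hA : w ∈ A i
      · exact ⟨hA, mem_insert_self w W⟩
      · simp [hA, hd.eq_zero_of_notMem hpW] at h
    · simp only [hwp, false_and, if_false, add_zero] at h
      exact ⟨(hd.mem_of_ne_zero i w h).1, mem_insert_of_mem (hd.mem_of_ne_zero i w h).2⟩
  · rcases mem_insert.1 hw with rfl | hw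
    · rw [sum_add_distrib, sum_eq_zero fun i _ => hd.eq_zero_of_notMem hpW i, zero_add,
        ← sum_approvers_phragLoad_sub (c := c) (l := l) hpA, approvers, sum_filter]
      simp only [true_and, t]
    · simp only [ne_of_mem_of_not_mem hw hpW, false_and, if_false, add_zero]
      exact hd.sum_voters w hw
  · rw [sum_add_distrib, hd.sum_projects]
    simp only [ite_and, sum_ite_eq', mem_univ, if_true]
    split_ifs <;> ring
  · obtain ⟨-, hqW⟩ := not_or.1 (mt mem_insert.2 hq)
    rcases mem_insert.1 hw with rfl | hw
    · calc ∑ i ∈ approvers A q, (d i w + if w = w ∧ w ∈ A i then t - l i else 0)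
          ≤ ∑ i ∈ approvers A q, (t - l i) := sum_le_sum fun i _ => by
            rw [hd.eq_zero_of_notMem hpW, zero_add]
            split_ifs
            exacts [le_rfl, sub_nonneg.2 (hl i)]
        _ ≤ c q := sum_sub_le_of_le_phragLoad hqA (hmin q (mem_phragCandidates.2 ⟨hqW, hqA⟩))
    · simp only [ne_of_mem_of_not_mem hw hpW, false_and, if_false, add_zero]
      exact hd.sum_approvers_le q hqW hqA w hw

lemma sum_load_eq (hd : LoadDistribution A c W l d) (S : Finset V) :
    ∑ i ∈ S, l i = ∑ w ∈ W, ∑ i ∈ S, d i w := by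
  simp_rw [← hd.sum_projects]
  rw [sum_comm]
  exact (sum_subset (subset_univ W) fun w _ hw => sum_eq_zero fun i _ =>
    hd.eq_zero_of_notMem hw i).symm

lemma sum_load_eq_costOf (hd : LoadDistribution A c W l d) : ∑ i, l i = costOf c W := by
  rw [hd.sum_load_eq]
  exact sum_congr rfl hd.sum_voters

lemma sum_load_eq_inter_biUnion (hd : LoadDistribution A c W l d) (S : Finset V) :
    ∑ i ∈ S, l i = ∑ w ∈ W ∩ S.biUnion A, ∑ i ∈ S, d i w := by
  rw [hd.sum_load_eq]
  refine (sum_subset inter_subset_left fun w hw hwS => sum_eq_zero fun i hi => ?_).symm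
  by_contra h
  exact hwS (mem_inter.2 ⟨hw, mem_biUnion.2 ⟨i, hi, (hd.mem_of_ne_zero i w h).1⟩⟩)

lemma sum_le_of_mem (hd : LoadDistribution A c W l d) (S : Finset V) {w : P} (hw : w ∈ W) :
    ∑ i ∈ S, d i w ≤ c w :=
  (sum_le_sum_of_subset_of_nonneg (subset_univ S) fun i _ _ => hd.nonneg i w).trans_eq
    (hd.sum_voters w hw)

lemma sum_le_of_subset_approvers (hd : LoadDistribution A c W l d) {S : Finset V} {q w : P}
    (hq : q ∉ W) (hS : S ⊆ approvers A q) (hSne : S.Nonempty) (hw : w ∈ W) :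
    ∑ i ∈ S, d i w ≤ c q :=
  (sum_le_sum_of_subset_of_nonneg hS fun i _ _ => hd.nonneg i w).trans
    (hd.sum_approvers_le q hq (hSne.mono hS) w hw)

lemma lt_card_mul_of_lt_costOf_add (hd : LoadDistribution A c W l d) {t : ℝ} {q : P}
    (hl : ∀ i, l i ≤ t) (hq : (approvers A q).Nonempty) (hqt : phragLoad A c l q ≤ t)
    (hb : b < costOf c W + c q) : b < Fintype.card V * t :=
  calc b < costOf c W + c q := hb
    _ ≤ ∑ i, l i + ∑ i ∈ approvers A q, (t - l i) := by
      rw [hd.sum_load_eq_costOf]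
      gcongr
      exact le_sum_sub_of_phragLoad_le hq hqt
    _ ≤ ∑ i, l i + ∑ i, (t - l i) := by
      gcongr
      exacts [fun i _ _ => sub_nonneg.2 (hl i), subset_univ _]
    _ = Fintype.card V * t := by
      rw [← sum_add_distrib]
      simp

end LoadDistribution

lemma PhragReach.exists_loadDistribution (hc : ∀ p, 0 ≤ c p) (h : PhragReach A c b W l) :
    ∃ d, LoadDistribution A c W l d := by
  induction h with
  | init => exact ⟨_, LoadDistribution.empty⟩
  | step hreach hp hmin _ ih =>
    obtain ⟨d, hd⟩ := ih
    exact ⟨_, hd.insert hp (hreach.le_phragLoad hc _ hp) hmin⟩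

lemma PhragOutput.exists_loadDistribution_costOf_lt (hc : ∀ p, 0 < c p)
    (hW : PhragOutput A c b W) {N' : Finset V} {T : Finset P} (hcoh : Cohesive A c b N' T)
    {p : P} (hp : p ∈ T \ W) :
    ∃ l d, LoadDistribution A c W l d ∧
      costOf c T < c p + ∑ w ∈ W ∩ N'.biUnion A, ∑ i ∈ N', d i w := by
  obtain ⟨l, hreach, hstop⟩ := hW
  obtain ⟨d, hd⟩ := hreach.exists_loadDistribution fun p => (hc p).le
  obtain ⟨hN', hTA, hcost⟩ := hcoh
  have hN'p : N' ⊆ approvers A p := fun i hi => mem_approvers.2 (hTA i hi (mem_sdiff.1 hp).1)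
  have hpc : p ∈ phragCandidates A W :=
    mem_phragCandidates.2 ⟨(mem_sdiff.1 hp).2, hN'.mono hN'p⟩
  have hl := hreach.le_phragLoad (fun p => (hc p).le) p hpc
  obtain ⟨q, hq, hqmin, hqb⟩ := hstop.resolve_left (ne_empty_of_mem hpc)
  have hbt := hd.lt_card_mul_of_lt_costOf_add hl (mem_phragCandidates.1 hq).2 (hqmin p hpc) hqb
  have hn : (0 : ℝ) < Fintype.card V := by
    exact_mod_cast hN'.card_pos.trans_le (card_le_univ N')
  have hN'pos : (0 : ℝ) < N'.card := by exact_mod_cast hN'.card_pos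
  refine ⟨l, d, hd, ?_⟩
  calc costOf c T ≤ N'.card / Fintype.card V * b := hcost
    _ < N'.card / Fintype.card V * (Fintype.card V * phragLoad A c l p) := by gcongr
    _ = N'.card * phragLoad A c l p := by field_simp
    _ ≤ c p + ∑ i ∈ N', l i := card_mul_phragLoad_le (hN'.mono hN'p) hN'p hl
    _ = c p + ∑ w ∈ W ∩ N'.biUnion A, ∑ i ∈ N', d i w := by rw [hd.sum_load_eq_inter_biUnion]

end Phragmen

section DNS

variable {P : Type} {c : P → ℝ} {μ : Finset P → ℝ}

lemma IsSatFun.singleton_pos (hμ : IsSatFun μ) (q : P) : 0 < μ {q} :=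
  (hμ.2.2 {q}).lt_of_ne fun h => singleton_ne_empty q ((hμ.2.1 {q}).1 h.symm)

lemma DNS.div_mul_le (hμ : DNS c μ) (hc : ∀ p, 0 < c p) {q w : P} (hq : 0 ≤ μ {q})
    {x : ℝ} (hxw : x ≤ c w) (hxq : x ≤ c q) : μ {q} / c q * x ≤ μ {w} := by
  have hρ : 0 ≤ μ {q} / c q := div_nonneg hq (hc q).le
  rcases le_total (c w) (c q) with h | h
  · calc μ {q} / c q * x ≤ μ {q} / c q * c w := mul_le_mul_of_nonneg_left hxw hρ
      _ ≤ μ {w} / c w * c w := mul_le_mul_of_nonneg_right (hμ.2 w q h).2 (hc w).le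
      _ = μ {w} := div_mul_cancel₀ _ (hc w).ne'
  · calc μ {q} / c q * x ≤ μ {q} / c q * c q := mul_le_mul_of_nonneg_left hxq hρ
      _ = μ {q} := div_mul_cancel₀ _ (hc q).ne'
      _ ≤ μ {w} := (hμ.2 q w h).1

lemma DNS.sum_lt_sum_of_sum_lt (hμ : DNS c μ) (hc : ∀ p, 0 < c p) {q : P} (hq : 0 < μ {q})
    {X Y : Finset P} {D : P → ℝ} (hX : ∀ r ∈ X, μ {r} / c r ≤ μ {q} / c q)
    (hY : ∀ w ∈ Y, D w ≤ c w ∧ D w ≤ c q) (hlt : ∑ r ∈ X, c r < ∑ w ∈ Y, D w) :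
    ∑ r ∈ X, μ {r} < ∑ w ∈ Y, μ {w} := by
  have hρ : 0 < μ {q} / c q := div_pos hq (hc q)
  calc ∑ r ∈ X, μ {r} ≤ ∑ r ∈ X, μ {q} / c q * c r :=
        sum_le_sum fun r hr => (div_le_iff₀ (hc r)).1 (hX r hr)
    _ < ∑ w ∈ Y, μ {q} / c q * D w := by
        rw [← mul_sum, ← mul_sum]
        exact mul_lt_mul_of_pos_left hlt hρ
    _ ≤ ∑ w ∈ Y, μ {w} :=
        sum_le_sum fun w hw => hμ.div_mul_le hc hq.le (hY w hw).1 (hY w hw).2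

lemma DNS.lt_insert_of_costOf_lt [DecidableEq P] (hμ : DNS c μ) (hc : ∀ p, 0 < c p)
    (hpos : ∀ q, 0 < μ {q}) {T S : Finset P} {p : P} (hp : p ∈ T \ S) {D : P → ℝ}
    (hDc : ∀ w ∈ S, D w ≤ c w) (hDq : ∀ w ∈ S, ∀ q ∈ T \ S, D w ≤ c q)
    (hcost : costOf c T < c p + ∑ w ∈ S, D w) : μ T < μ (insert p S) := by
  obtain ⟨q, hq, hqmax⟩ := exists_max_image (T \ S) (fun r => μ {r} / c r) ⟨p, hp⟩
  have hsplit (f : P → ℝ) :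
      ∑ r ∈ T, f r = ∑ r ∈ (T \ S).erase p, f r + f p + ∑ r ∈ S ∩ T, f r := by
    rw [sum_erase_add _ _ hp, add_comm, inter_comm, sum_inter_add_sum_sdiff]
  have hcostX : ∑ r ∈ (T \ S).erase p, c r < ∑ w ∈ S \ T, D w := by
    have hST : ∑ w ∈ S ∩ T, D w ≤ ∑ w ∈ S ∩ T, c w :=
      sum_le_sum fun w hw => hDc w (mem_inter.1 hw).1
    have := sum_inter_add_sum_sdiff S T D
    rw [costOf, hsplit] at hcost
    linarith
  have hμX := hμ.sum_lt_sum_of_sum_lt hc (hpos q) (fun r hr => hqmax r (mem_of_mem_erase hr))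
    (fun w hw => ⟨hDc w (mem_sdiff.1 hw).1, hDq w (mem_sdiff.1 hw).1 q hq⟩) hcostX
  rw [hμ.1 T, hμ.1 (insert p S), sum_insert (mem_sdiff.1 hp).2, hsplit,
    ← sum_inter_add_sum_sdiff S T]
  linarith

end DNS

end ABB

theorem statement15_general {V P : Type} [Fintype V] [Fintype P] [DecidableEq P]
    (A : V → Finset P) (c : P → ℝ) (b : ℝ)
    (hc : ∀ p : P, 0 < c p)
    (W : Finset P) (hW : ABB.PhragOutput A c b W) :
    ∀ μ : Finset P → ℝ, ABB.IsSatFun μ → ABB.DNS c μ → ABB.PJRx A c b μ W := by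
  intro μ hsat hdns N' T hcoh p hp
  obtain ⟨l, d, hd, hcost⟩ := hW.exists_loadDistribution_costOf_lt hc hcoh hp
  obtain ⟨⟨i₀, hi₀⟩, hTA, -⟩ := hcoh
  have hTS : T \ (W ∩ N'.biUnion A) = T \ W := by
    ext r
    have hr : r ∈ T → r ∈ N'.biUnion A := fun hr => mem_biUnion.2 ⟨i₀, hi₀, hTA i₀ hi₀ hr⟩
    simp only [mem_sdiff, mem_inter]
    tauto
  refine hdns.lt_insert_of_costOf_lt hc hsat.singleton_pos (hTS ▸ hp)
    (fun w hw => hd.sum_le_of_mem N' (mem_inter.1 hw).1) (fun w hw q hq => ?_) hcost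
  rw [hTS, mem_sdiff] at hq
  exact hd.sum_le_of_subset_approvers hq.2 (fun i hi => ABB.mem_approvers.2 (hTA i hi hq.1))
    ⟨i₀, hi₀⟩ (mem_inter.1 hw).1

/-- Every output of sequential Phragmén satisfies PJR-x w.r.t. every
DNS satisfaction function `μ`. -/
theorem statement15 {V P : Type} [Fintype V] [DecidableEq V] [Fintype P] [DecidableEq P]
    (A : V → Finset P) (c : P → ℝ) (b : ℝ)
    (hn : 0 < Fintype.card V) (hc : ∀ p : P, 0 < c p) (hb : 0 < b)
    (W : Finset P) (hW : ABB.PhragOutput A c b W) :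
    ∀ μ : Finset P → ℝ, ABB.IsSatFun μ → ABB.DNS c μ → ABB.PJRx A c b μ W :=
  statement15_general A c b hc W hW
end

section
/- Let s : ℝ_{>0} → ℝ_{>0} be a function that violates DNS, i.e., there exist values 0 < x ≤ x' such that s(x) > s(x') or s(x)/x < s(x')/x'. Then there exists an ABB instance (A, P, c, b) and an output W of MES[μ^#] on this instance such that W violates PJR-x with respect to the additive satisfaction function μ defined by μ(p) = s(c(p)) for each p ∈ P. -/
/-!
Suppose `s` violates DNS at `0 < x ≤ x'`. Take `n` voters with budget `β` each, `J` common projects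
of cost `γ` approved by everybody and `t` group projects of cost `τ` approved only by the first `g`
voters. Under cardinality satisfaction a common project is affordable at rate `γ / n` and, if
`g γ ≤ n τ`, no group project is affordable at a smaller rate, so MES buys the common projects
first; if then `g (β - J γ / n) < τ`, the group cannot afford a group project and MES stops. If
`t τ ≤ g β` the group is cohesive for all group projects, and PJR-x fails once
`J s(γ) + s(τ) ≤ t s(τ)`.

If `s x' < s x`, take `γ = x'`, `τ = β = x`, `g = J = t` and `n = ⌈t x' / x⌉`; if
`s x / x < s x' / x'`, a single voter suffices, with `γ = x`, `τ = x'`, `J = ⌈t x' / x⌉` and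
`β = J x`. In both cases `t` is large.
-/

open Finset

open Finset

lemma exists_nat_mul_mem_Ico {a x : ℝ} (ha : 0 ≤ a) (hx : 0 < x) :
    ∃ k : ℕ, a ≤ k * x ∧ k * x < a + x := by
  refine ⟨⌈a / x⌉₊, (div_le_iff₀ hx).1 (Nat.le_ceil _), ?_⟩
  have := mul_lt_mul_of_pos_right (Nat.ceil_lt_add_one (div_nonneg ha hx.le)) hx
  rwa [add_mul, div_mul_cancel₀ _ hx.ne', one_mul] at this

namespace ABB

variable {V P : Type} [Fintype V] [DecidableEq P]
  {A : V → Finset P} {c : P → ℝ} {bud : V → ℝ} {p : P} {ρ : ℝ}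

lemma Affordable.cost_le_sum_budget {μ : Finset P → ℝ} (h : Affordable A c μ bud p ρ) :
    c p ≤ ∑ i ∈ approvers A p, bud i :=
  h ▸ sum_le_sum fun _ _ => min_le_left _ _

lemma Affordable.cost_le_card_mul (h : Affordable A c (fun S => (#S : ℝ)) bud p ρ) :
    c p ≤ #(approvers A p) * ρ := by
  rw [← h, ← nsmul_eq_mul]
  exact sum_le_card_nsmul _ _ _ fun _ _ => by simp

lemma affordable_card_of_le_budget (hcost : c p = #(approvers A p) * ρ)
    (hbud : ∀ i ∈ approvers A p, ρ ≤ bud i) :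
    Affordable A c (fun S => (#S : ℝ)) bud p ρ := by
  simp only [Affordable, card_singleton, Nat.cast_one, mul_one]
  rw [sum_congr rfl fun i hi => min_eq_right (hbud i hi), sum_const, nsmul_eq_mul, hcost]

def ExistsMESOutputNotPJRx (s : ℝ → ℝ) : Prop :=
  ∃ (n m : ℕ) (A : Fin n → Finset (Fin m)) (c : Fin m → ℝ) (b : ℝ) (W : Finset (Fin m)),
    (∀ p : Fin m, 0 < c p) ∧ 0 < b ∧ 0 < n ∧
    MESOutput A c b (fun S => (S.card : ℝ)) W ∧ ¬ PJRx A c b (fun S => ∑ p ∈ S, s (c p)) W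

end ABB

namespace DNSGadget

open ABB

def ballots (g n J t : ℕ) (i : Fin n) : Finset (Fin (J + t)) := {p | (p : ℕ) < J ∨ (i : ℕ) < g}

noncomputable def cost (J t : ℕ) (γ τ : ℝ) (p : Fin (J + t)) : ℝ := if (p : ℕ) < J then γ else τ

def group (g n : ℕ) : Finset (Fin n) := {i | (i : ℕ) < g}

def commonProjects (J t j : ℕ) : Finset (Fin (J + t)) := {p | (p : ℕ) < j}

def groupProjects (J t : ℕ) : Finset (Fin (J + t)) := {p | ¬ (p : ℕ) < J}

variable {g n J t : ℕ} {γ τ β : ℝ}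

lemma card_group (hgn : g ≤ n) : #(group g n) = g := by
  rw [group, Fin.card_filter_val_lt, min_eq_right hgn]

lemma card_commonProjects : #(commonProjects J t J) = J := by
  rw [commonProjects, Fin.card_filter_val_lt, min_eq_right (Nat.le_add_right J t)]

lemma card_groupProjects : #(groupProjects J t) = t := by
  have := card_filter_add_card_filter_not (s := univ) fun p : Fin (J + t) => (p : ℕ) < J
  rw [← commonProjects, card_commonProjects, card_univ, Fintype.card_fin] at this
  rw [groupProjects]
  omega

lemma sum_comp_cost_commonProjects (f : ℝ → ℝ) :
    ∑ p ∈ commonProjects J t J, f (cost J t γ τ p) = J * f γ := by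
  rw [sum_congr rfl fun p hp => by rw [cost, if_pos (by simpa [commonProjects] using hp)],
    sum_const, card_commonProjects, nsmul_eq_mul]

lemma sum_comp_cost_groupProjects (f : ℝ → ℝ) :
    ∑ p ∈ groupProjects J t, f (cost J t γ τ p) = t * f τ := by
  rw [sum_congr rfl fun p hp => by rw [cost, if_neg (by simpa [groupProjects] using hp)],
    sum_const, card_groupProjects, nsmul_eq_mul]

lemma approvers_of_lt {p : Fin (J + t)} (hp : (p : ℕ) < J) :
    approvers (ballots g n J t) p = univ := by
  ext i; simp [approvers, ballots, hp]

lemma approvers_of_not_lt {p : Fin (J + t)} (hp : ¬ (p : ℕ) < J) :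
    approvers (ballots g n J t) p = group g n := by
  ext i; simp [approvers, ballots, group, hp]

lemma commonRate_le_of_affordable (hg : 0 < g) (hgn : g ≤ n) (hγτ : g * γ ≤ n * τ)
    {bud : Fin n → ℝ} {p : Fin (J + t)} {ρ : ℝ}
    (h : Affordable (ballots g n J t) (cost J t γ τ) (fun S => (#S : ℝ)) bud p ρ) :
    γ ≤ n * ρ := by
  have hle := h.cost_le_card_mul
  by_cases hp : (p : ℕ) < J
  · rwa [approvers_of_lt hp, card_univ, Fintype.card_fin, cost, if_pos hp] at hle
  · rw [approvers_of_not_lt hp, card_group hgn, cost, if_neg hp] at hle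
    have hg' : (0 : ℝ) < g := by exact_mod_cast hg
    nlinarith

lemma mesReach_commonProjects (hg : 0 < g) (hgn : g ≤ n) (hγ : 0 < γ) (hγτ : g * γ ≤ n * τ)
    (hJ : J * γ ≤ n * β) :
    ∀ j ≤ J, MESReach (ballots g n J t) (cost J t γ τ) (fun S => (#S : ℝ)) β
      (commonProjects J t j) (fun _ => β - j * γ / n)
  | 0, _ => by
    rw [show commonProjects J t 0 = ∅ by ext; simp [commonProjects],
      show (fun _ : Fin n => β - ((0 : ℕ) : ℝ) * γ / n) = fun _ => β by simp]
    exact MESReach.init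
  | j + 1, hj => by
    have hjJ : j < J := hj
    have hn : (0 : ℝ) < n := by exact_mod_cast hg.trans_le hgn
    let p : Fin (J + t) := ⟨j, by omega⟩
    have hrate : γ / n ≤ β - j * γ / n := by
      have : ((j : ℝ) + 1) * γ ≤ n * β :=
        le_trans (mul_le_mul_of_nonneg_right (by exact_mod_cast hj) hγ.le) hJ
      rw [le_sub_iff_add_le, ← add_div, div_le_iff₀ hn]
      linarith
    have hstep := (mesReach_commonProjects hg hgn hγ hγτ hJ j hjJ.le).step (p := p) (ρ := γ / n)
      (by simp [commonProjects, p]) (by positivity)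
      (affordable_card_of_le_budget
        (by rw [approvers_of_lt hjJ, card_univ, Fintype.card_fin, cost, if_pos hjJ]; field_simp)
        fun _ _ => hrate)
      fun _ _ _ _ h => (div_le_iff₀' hn).2 (commonRate_le_of_affordable hg hgn hγτ h)
    convert hstep using 1
    · ext q
      simp only [commonProjects, Order.lt_add_one_iff, mem_filter, mem_univ, true_and, mem_insert,
        Fin.ext_iff, p]
      omega
    · funext i
      simp only [Nat.cast_add, Nat.cast_one, ballots, mem_filter, mem_univ, hjJ, true_or,
        and_self, ↓reduceIte, card_singleton, mul_one, min_eq_right hrate, p]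
      ring

lemma mesOutput_commonProjects (hg : 0 < g) (hgn : g ≤ n) (hγ : 0 < γ) (hγτ : g * γ ≤ n * τ)
    (hJ : J * γ ≤ n * β) (hstuck : g * (β - J * γ / n) < τ) :
    MESOutput (ballots g n J t) (cost J t γ τ) (n * β) (fun S => (#S : ℝ))
      (commonProjects J t J) := by
  have hn : (n : ℝ) ≠ 0 := by exact_mod_cast (hg.trans_le hgn).ne'
  refine ⟨fun _ => β - J * γ / n, ?_, fun p hp ρ _ h => ?_⟩
  · rw [Fintype.card_fin, mul_div_cancel_left₀ _ hn]
    exact mesReach_commonProjects hg hgn hγ hγτ hJ J le_rfl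
  · have hp : ¬ (p : ℕ) < J := by simpa [commonProjects] using hp
    have hle := h.cost_le_sum_budget
    rw [approvers_of_not_lt hp, sum_const, card_group hgn, nsmul_eq_mul, cost, if_neg hp] at hle
    linarith

lemma not_pjrx_commonProjects (s : ℝ → ℝ) (hg : 0 < g) (hgn : g ≤ n) (ht : 0 < t)
    (hcoh : t * τ ≤ g * β) (hsat : J * s γ ≤ (t - 1) * s τ) :
    ¬ PJRx (ballots g n J t) (cost J t γ τ) (n * β) (fun S => ∑ p ∈ S, s (cost J t γ τ p))
      (commonProjects J t J) := by
  have hn : (n : ℝ) ≠ 0 := by exact_mod_cast (hg.trans_le hgn).ne'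
  have hi₀ : (⟨0, hg.trans_le hgn⟩ : Fin n) ∈ group g n := by simp [group, hg]
  have hcohesive :
      Cohesive (ballots g n J t) (cost J t γ τ) (n * β) (group g n) (groupProjects J t) := by
    refine ⟨⟨_, hi₀⟩, fun i hi p _ => ?_, ?_⟩
    · simp_all [ballots, group]
    · rw [costOf, sum_comp_cost_groupProjects fun x => x, card_group hgn, Fintype.card_fin,
        div_mul_comm, mul_div_cancel_left₀ _ hn]
      linarith
  have hW : commonProjects J t J ∩ (group g n).biUnion (ballots g n J t) = commonProjects J t J :=
    inter_eq_left.2 fun p hp => mem_biUnion.2 ⟨_, hi₀, by simp_all [commonProjects, ballots]⟩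
  let p₀ : Fin (J + t) := ⟨J, by omega⟩
  have hp₀ : p₀ ∉ commonProjects J t J := by simp [commonProjects, p₀]
  intro h
  have := h _ _ hcohesive p₀ (mem_sdiff.2 ⟨by simp [groupProjects, p₀], hp₀⟩)
  dsimp only at this
  rw [hW, sum_insert hp₀, sum_comp_cost_groupProjects s, sum_comp_cost_commonProjects s, cost,
    if_neg (lt_irrefl J)] at this
  linarith

theorem existsMESOutputNotPJRx (s : ℝ → ℝ) (hg : 0 < g) (hgn : g ≤ n) (ht : 0 < t)
    (hγ : 0 < γ) (hτ : 0 < τ) (hγτ : g * γ ≤ n * τ) (hJ : J * γ ≤ n * β)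
    (hstuck : g * (β - J * γ / n) < τ) (hcoh : t * τ ≤ g * β) (hsat : J * s γ ≤ (t - 1) * s τ) :
    ExistsMESOutputNotPJRx s := by
  have hβ : 0 < β := by
    have : (0 : ℝ) < t * τ := by positivity
    exact pos_of_mul_pos_right (this.trans_le hcoh) (Nat.cast_nonneg g)
  refine ⟨n, J + t, ballots g n J t, cost J t γ τ, n * β, commonProjects J t J,
    fun p => ?_, by have := hg.trans_le hgn; positivity, hg.trans_le hgn,
    mesOutput_commonProjects hg hgn hγ hγτ hJ hstuck, not_pjrx_commonProjects s hg hgn ht hcoh hsat⟩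
  unfold cost; split_ifs <;> assumption

end DNSGadget

namespace ABB

variable {s : ℝ → ℝ} {x x' : ℝ}

lemma existsMESOutputNotPJRx_of_lt_of_le (hs : ∀ x : ℝ, 0 < x → 0 < s x) (hx : 0 < x)
    (hxx' : x ≤ x') (hdec : s x' < s x) : ExistsMESOutputNotPJRx s := by
  have hx' : 0 < x' := hx.trans_le hxx'
  have hsx' := hs x' hx'
  obtain ⟨t, ht⟩ := exists_nat_ge (s x / (s x - s x'))
  rw [div_le_iff₀ (sub_pos.2 hdec)] at ht
  have ht₀ : (0 : ℝ) < t := by nlinarith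
  obtain ⟨n, hn, hn'⟩ := exists_nat_mul_mem_Ico (a := t * x') (by positivity) hx
  have htn : t ≤ n := by
    have : (t : ℝ) ≤ n := le_of_mul_le_mul_right (by nlinarith) hx
    exact_mod_cast this
  have hnR : (0 : ℝ) < n := ht₀.trans_le (by exact_mod_cast htn)
  refine DNSGadget.existsMESOutputNotPJRx (g := t) (n := n) (J := t) (t := t) (γ := x') (τ := x)
    (β := x) s (by exact_mod_cast ht₀) htn (by exact_mod_cast ht₀) hx' hx hn hn ?_ le_rfl
    (by linarith)
  rw [show (t : ℝ) * (x - t * x' / n) = t * (n * x - t * x') / n by field_simp, div_lt_iff₀ hnR]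
  nlinarith

lemma existsMESOutputNotPJRx_of_div_lt_div (hs : ∀ x : ℝ, 0 < x → 0 < s x) (hx : 0 < x)
    (hxx' : x ≤ x') (hinc : s x / x < s x' / x') : ExistsMESOutputNotPJRx s := by
  have hx' : 0 < x' := hx.trans_le hxx'
  have hsx := hs x hx
  have hsx' := hs x' hx'
  have hd : 0 < s x' * x - s x * x' := sub_pos.2 ((div_lt_div_iff₀ hx hx').1 hinc)
  obtain ⟨t, ht⟩ := exists_nat_ge (x * (s x + s x') / (s x' * x - s x * x'))
  rw [div_le_iff₀ hd] at ht
  have ht₀ : (0 : ℝ) < t := by nlinarith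
  obtain ⟨J, hJ, hJ'⟩ := exists_nat_mul_mem_Ico (a := t * x') (by positivity) hx
  refine DNSGadget.existsMESOutputNotPJRx (g := 1) (n := 1) (J := J) (t := t) (γ := x) (τ := x')
    (β := J * x) s one_pos le_rfl (by exact_mod_cast ht₀) hx hx' (by simpa) (by simp) (by simpa)
    (by simpa) ?_
  refine le_of_mul_le_mul_right ?_ hx
  nlinarith

end ABB

/-- If `s : ℝ_{>0} → ℝ_{>0}` violates DNS, then there exists an ABB
instance and an output `W` of MES[μ^#] on it such that `W` violates PJR-x w.r.t. the
additive satisfaction function induced by `p ↦ s (c p)`. -/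
theorem statement16 (s : ℝ → ℝ) (hs : ∀ x : ℝ, 0 < x → 0 < s x)
    (hviol : ∃ x x' : ℝ, 0 < x ∧ x ≤ x' ∧ (s x' < s x ∨ s x / x < s x' / x')) :
    ∃ (n m : ℕ) (A : Fin n → Finset (Fin m)) (c : Fin m → ℝ) (b : ℝ)
      (W : Finset (Fin m)),
      (∀ p : Fin m, 0 < c p) ∧ 0 < b ∧ 0 < n ∧
      ABB.MESOutput A c b (fun S => (S.card : ℝ)) W ∧
      ¬ ABB.PJRx A c b (fun S => ∑ p ∈ S, s (c p)) W := by
  obtain ⟨x, x', hx, hxx', hdec | hinc⟩ := hviol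
  · exact ABB.existsMESOutputNotPJRx_of_lt_of_le hs hx hxx' hdec
  · exact ABB.existsMESOutputNotPJRx_of_div_lt_div hs hx hxx' hinc
end

section
/- Given an ABB instance and any satisfaction function μ, if an outcome W satisfies PJR-x with respect to μ, then W satisfies μ-Local-BPJR. -/
open Finset

namespace ABB

variable {V P : Type} [Fintype V] {A : V → Finset P} {c : P → ℝ} {b : ℝ}
  {μ : Finset P → ℝ} {N' : Finset V} {S T W : Finset P}

theorem Cohesive.of_subset_of_costOf_le (hT : Cohesive A c b N' T) (hS : ∀ i ∈ N', S ⊆ A i)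
    (hcost : costOf c S ≤ costOf c T) : Cohesive A c b N' S :=
  ⟨hT.1, hS, hcost.trans hT.2.2⟩

theorem Cohesive.subset_biUnion [DecidableEq P] (hS : Cohesive A c b N' S) :
    S ⊆ N'.biUnion A := by
  obtain ⟨i, hi⟩ := hS.1
  exact (hS.2.1 i hi).trans (subset_biUnion_of_mem A hi)

/-- Adding a missing project of `S` to the group's share of `W` yields a subset of `S`,
which PJR-x values strictly above `S`. -/
theorem PJRx.not_inter_ssubset [DecidableEq V] [DecidableEq P] (hμ : Monotone μ)
    (hW : PJRx A c b μ W) (hS : Cohesive A c b N' S) : ¬ N'.biUnion A ∩ W ⊂ S := by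
  intro hssub
  obtain ⟨p, hpS, hp⟩ := exists_of_ssubset hssub
  have hpW : p ∉ W := fun h => hp (mem_inter.2 ⟨hS.subset_biUnion hpS, h⟩)
  have hsub : insert p (W ∩ N'.biUnion A) ⊆ S :=
    insert_subset hpS (inter_comm W _ ▸ hssub.subset)
  exact (hW N' S hS p (mem_sdiff.2 ⟨hpS, hpW⟩)).not_ge (hμ hsub)

end ABB

theorem statement18_general {V P : Type} [Fintype V] [DecidableEq V] [DecidableEq P]
    (A : V → Finset P) (c : P → ℝ) (b : ℝ)
    (μ : Finset P → ℝ) (hμ : ABB.IsSatFun μ)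
    (W : Finset P)
    (hPJRx : ABB.PJRx A c b μ W) :
    ABB.LocalBPJR A c b μ W := by
  rintro ⟨N', T, Wstar, hT, hssub, hWstar, hcost, -⟩
  have hWstar_cohesive := hT.of_subset_of_costOf_le hWstar hcost
  exact hPJRx.not_inter_ssubset (fun _ _ => hμ.1 _ _) hWstar_cohesive hssub

/-- If an outcome satisfies PJR-x w.r.t. `μ`, then it satisfies
`μ`-Local-BPJR. -/
theorem statement18 {V P : Type} [Fintype V] [DecidableEq V] [Fintype P] [DecidableEq P]
    (A : V → Finset P) (c : P → ℝ) (b : ℝ)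
    (hn : 0 < Fintype.card V) (hc : ∀ p : P, 0 < c p) (hb : 0 < b)
    (μ : Finset P → ℝ) (hμ : ABB.IsSatFun μ)
    (W : Finset P) (hW : ABB.costOf c W ≤ b)
    (hPJRx : ABB.PJRx A c b μ W) :
    ABB.LocalBPJR A c b μ W :=
  statement18_general A c b μ hμ W hPJRx
end
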